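/- For every n ≥ 4 there exists a two-sided ideal L over a four-letter alphabet with quotient complexity κ(L) = n whose reverse L^R has quotient complexity exactly 2^{n-2} + 1; such a witness is the language accepted by the DFA with states {0,1,…,n-1}, initial state 0, final state set {n-1}, and letters a = the cycle (1,2,…,n-2) fixing 0 and n-1, d mapping n-2 to 0 and fixing all other states, e mapping every state in {0,…,n-2} to 1 and fixing n-1, and f mapping 1 to n-1 and fixing all other states. -/

import Mathlib

/-!
The state `n-1` is a sink, and every state is reachable and separated from every other one, so
`κ(L) = n`. Since all states are reachable, the left quotients of `Lᴿ` correspond bijectively to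
the sets `S(u) = {q | u is accepted from q}`. These sets are exactly the sets `T ∋ n-1` such that
`0 ∈ T` forces `T` to be everything: this property is stable under preimages by each letter
(from `0` only `e` leaves `0`, and `e` sends every state but `n-1` to `1`), and conversely, if
`a^j` moves a state `m` to `1` and `a^k` undoes this rotation, then `S(a^j f a^k u) = S(u) ∪ {m}`.
There are `2^(n-2) + 1` such sets. Finally, `0 ∈ S(w)` forces `S(w)` to be all states, so `L` is
also a left ideal.
-/

/-- The left quotient of a language `L` by a word `w`: `{x | w ++ x ∈ L}`. -/
def leftQ {α : Type*} (L : Set (List α)) (w : List α) : Set (List α) :=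
  {x | w ++ x ∈ L}

/-- Quotient (state) complexity: the number of distinct left quotients of `L`. -/
noncomputable def quotCompl {α : Type*} (L : Set (List α)) : ℕ :=
  Nat.card (Set.range (leftQ L))

/-- The syntactic (Myhill) congruence of `L`. -/
def synRel {α : Type*} (L : Set (List α)) (x y : List α) : Prop :=
  ∀ u v : List α, u ++ x ++ v ∈ L ↔ u ++ y ++ v ∈ L

/-- The syntactic setoid on the free semigroup of non-empty words. -/
def synSetoid {α : Type*} (L : Set (List α)) : Setoid {w : List α // w ≠ []} :=
  ⟨fun x y => synRel L x.1 y.1,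
   ⟨fun _ _ _ => Iff.rfl, fun h u v => (h u v).symm,
    fun h₁ h₂ u v => (h₁ u v).trans (h₂ u v)⟩⟩

/-- Syntactic complexity: the cardinality of the syntactic semigroup of `L`. -/
noncomputable def synCompl {α : Type*} (L : Set (List α)) : ℕ :=
  Nat.card (Quotient (synSetoid L))

/-- `L` is a right ideal: it is non-empty and `L = LΣ*`. -/
def IsRightIdeal {α : Type*} (L : Set (List α)) : Prop :=
  L.Nonempty ∧ L = {x | ∃ u ∈ L, ∃ v : List α, x = u ++ v}

/-- `L` is a left ideal: it is non-empty and `L = Σ*L`. -/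
def IsLeftIdeal {α : Type*} (L : Set (List α)) : Prop :=
  L.Nonempty ∧ L = {x | ∃ u : List α, ∃ v ∈ L, x = u ++ v}

/-- `L` is a two-sided ideal: it is non-empty and `L = Σ*LΣ*`. -/
def IsTwoSidedIdeal {α : Type*} (L : Set (List α)) : Prop :=
  L.Nonempty ∧ L = {x | ∃ u : List α, ∃ w ∈ L, ∃ v : List α, x = u ++ w ++ v}

/-- The reverse of a language. -/
def langReverse {α : Type*} (L : Set (List α)) : Set (List α) :=
  List.reverse '' L

/-- A DFA is minimal: every state is reachable from the start state, and no two
distinct states accept the same set of words. -/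
def DFAMinimal {α σ : Type*} (M : DFA α σ) : Prop :=
  (∀ q : σ, ∃ w : List α, M.evalFrom M.start w = q) ∧
  ∀ p q : σ, (∀ w : List α, M.evalFrom p w ∈ M.accept ↔ M.evalFrom q w ∈ M.accept) → p = q

/-- The transition function of the automaton of Definition 4 restricted to the
letters `{a, d, e, f}`: `a = (1,2,…,n-2)` fixing `0` and `n-1`, `d : n-2 ↦ 0`,
`e` maps every state in `{0,…,n-2}` to `1` and fixes `n-1`, and `f : 1 ↦ n-1`. -/
def step19 (n : ℕ) (hn : 4 ≤ n) : Fin n → Fin 4 → Fin n := fun q l =>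
  if l.val = 0 then -- a : the cycle (1, 2, …, n-2), fixing 0 and n-1
    if q.val = 0 then q
    else if q.val = n - 2 then ⟨1, by omega⟩
    else if _h : q.val = n - 1 then q
    else ⟨q.val + 1, by have := q.isLt; omega⟩
  else if l.val = 1 then -- d : n-2 ↦ 0, fixing all other states
    if q.val = n - 2 then ⟨0, by omega⟩ else q
  else if l.val = 2 then -- e : every state in {0,…,n-2} ↦ 1, fixing n-1
    if q.val = n - 1 then q else ⟨1, by omega⟩
  else -- f : 1 ↦ n-1, fixing all other states
    if q.val = 1 then ⟨n - 1, by omega⟩ else q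

def setOfMemAndNotMemEquiv {σ : Type*} {a b : σ} (hab : a ≠ b) :
    ↥{T : Set σ | a ∈ T ∧ b ∉ T} ≃ Set ↥({a, b}ᶜ : Set σ) where
  toFun T := Subtype.val ⁻¹' T.1
  invFun S := ⟨insert a (Subtype.val '' S), Set.mem_insert a _, by
    rintro (h | ⟨x, -, hx⟩)
    · exact hab h.symm
    · exact x.2 (Or.inr hx)⟩
  left_inv T := by
    ext x
    by_cases hx : x ∈ ({a, b} : Set σ)
    · rcases hx with rfl | rfl
      · simpa using T.2.1
      · simpa [hab.symm] using T.2.2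
    · simp [Set.mem_insert_iff, show x ≠ a from fun h => hx (Or.inl h), hx]
  right_inv S := by
    ext ⟨x, hx⟩
    simp only [Set.mem_preimage, Set.mem_insert_iff, show x ≠ a from fun h => hx (Or.inl h),
      false_or, Set.mem_image, Subtype.exists, exists_and_right, exists_eq_right]
    exact ⟨fun ⟨_, h⟩ => h, fun h => ⟨hx, h⟩⟩

theorem Set.ncard_setOf_mem_and_notMem {σ : Type*} [Finite σ] {a b : σ} (hab : a ≠ b) :
    {T : Set σ | a ∈ T ∧ b ∉ T}.ncard = 2 ^ (Nat.card σ - 2) := by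
  have := Fintype.ofFinite σ
  classical
  rw [← Nat.card_coe_set_eq, Nat.card_congr (setOfMemAndNotMemEquiv hab),
    Nat.card_eq_fintype_card, Fintype.card_set, ← Nat.card_eq_fintype_card, Nat.card_coe_set_eq,
    Set.ncard_compl, Set.ncard_pair hab]

theorem mem_langReverse {α : Type*} {L : Set (List α)} {x : List α} :
    x ∈ langReverse L ↔ x.reverse ∈ L :=
  ⟨by rintro ⟨y, hy, rfl⟩; simpa using hy, fun h => ⟨_, h, List.reverse_reverse x⟩⟩

namespace DFA

variable {α σ : Type*} (M : DFA α σ)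

def statesAccepting (u : List α) : Set σ := {q | M.evalFrom q u ∈ M.accept}

theorem statesAccepting_cons (l : α) (u : List α) :
    M.statesAccepting (l :: u) = (M.step · l) ⁻¹' M.statesAccepting u := rfl

theorem statesAccepting_append (w u : List α) :
    M.statesAccepting (w ++ u) = (M.evalFrom · w) ⁻¹' M.statesAccepting u := by
  ext q
  simp [statesAccepting, evalFrom_of_append]

theorem leftQ_accepts (w : List α) :
    leftQ (M.accepts : Set (List α)) w = M.acceptsFrom (M.eval w) := by
  ext x
  change M.evalFrom M.start (w ++ x) ∈ M.accept ↔ _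
  rw [evalFrom_of_append]
  rfl

theorem quotCompl_accepts_of_minimal (hM : DFAMinimal M) :
    quotCompl (M.accepts : Set (List α)) = Nat.card σ := by
  have heval : Function.Surjective M.eval := hM.1
  have hinj : Function.Injective M.acceptsFrom := fun p q h =>
    hM.2 p q fun w => Set.ext_iff.mp h w
  have hrange : Set.range (leftQ (M.accepts : Set (List α))) = Set.range M.acceptsFrom := by
    rw [← heval.range_comp]
    exact congrArg Set.range (funext M.leftQ_accepts)
  unfold quotCompl
  rw [hrange]
  exact Nat.card_range_of_injective hinj

theorem leftQ_langReverse_accepts_reverse (w : List α) :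
    leftQ (langReverse (M.accepts : Set (List α))) w.reverse =
      {x | M.eval x.reverse ∈ M.statesAccepting w} := by
  ext x
  refine mem_langReverse.trans ?_
  rw [List.reverse_append, List.reverse_reverse]
  exact Iff.of_eq (congrArg (· ∈ M.accept) (M.evalFrom_of_append _ _ _))

theorem quotCompl_langReverse_accepts (hreach : Function.Surjective M.eval) :
    quotCompl (langReverse (M.accepts : Set (List α))) =
      Nat.card (Set.range M.statesAccepting) := by
  set Φ : Set σ → Set (List α) := fun T => {x | M.eval x.reverse ∈ T}
  have hΦ : Function.Injective Φ := fun S T h => by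
    ext q
    obtain ⟨w, rfl⟩ := hreach q
    simpa [Φ] using Set.ext_iff.mp h w.reverse
  have hrange : Set.range (leftQ (langReverse (M.accepts : Set (List α)))) =
      Φ '' Set.range M.statesAccepting := by
    rw [← Set.range_comp, ← List.reverse_involutive.surjective.range_comp]
    exact congrArg Set.range (funext M.leftQ_langReverse_accepts_reverse)
  unfold quotCompl
  rw [hrange, Nat.card_image_of_injective hΦ]

end DFA

theorem isTwoSidedIdeal_of_forall_append_mem {α : Type*} {L : Set (List α)} (hL : L.Nonempty)
    (h : ∀ u w v, w ∈ L → u ++ w ++ v ∈ L) : IsTwoSidedIdeal L :=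
  ⟨hL, Set.ext fun x =>
    ⟨fun hx => ⟨[], x, hx, [], by simp⟩,
      by rintro ⟨u, w, hw, v, rfl⟩; exact h u w v hw⟩⟩

namespace IdealWitness

abbrev a : Fin 4 := 0
abbrev e : Fin 4 := 2
abbrev f : Fin 4 := 3

variable {n : ℕ} (hn : 4 ≤ n)

def dfa : DFA (Fin 4) (Fin n) :=
  { step := step19 n hn, start := ⟨0, by omega⟩, accept := {⟨n - 1, by omega⟩} }

def zero : Fin n := ⟨0, by omega⟩
def one : Fin n := ⟨1, by omega⟩
def last : Fin n := ⟨n - 1, by omega⟩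

theorem zero_ne_last : zero hn ≠ last hn := fun h => by
  have : 0 = n - 1 := congrArg Fin.val h
  omega

theorem one_le_val {q : Fin n} (h0 : q ≠ zero hn) : 1 ≤ q.val := by
  rw [Ne, Fin.ext_iff] at h0
  exact Nat.one_le_iff_ne_zero.mpr h0

theorem val_le_of_ne_last {q : Fin n} (hl : q ≠ last hn) : q.val ≤ n - 2 := by
  rw [Ne, Fin.ext_iff] at hl
  have := q.isLt
  change q.val ≠ n - 1 at hl
  omega

theorem step_last (l : Fin 4) : (dfa hn).step (last hn) l = last hn := by
  apply Fin.ext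
  simp only [dfa, step19, last]
  split_ifs <;> simp_all <;> omega

theorem step_zero {l : Fin 4} (hl : l ≠ e) : (dfa hn).step (zero hn) l = zero hn := by
  rw [Ne, Fin.ext_iff] at hl
  apply Fin.ext
  simp only [dfa, step19, zero]
  split_ifs <;> simp_all

theorem step_e {q : Fin n} (hq : q ≠ last hn) : (dfa hn).step q e = one hn := by
  rw [Ne, Fin.ext_iff] at hq
  apply Fin.ext
  simp only [dfa, step19, one]
  split_ifs <;> simp_all [last]

theorem step_f_one : (dfa hn).step (one hn) f = last hn := by
  apply Fin.ext
  simp [dfa, step19, one, last]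

theorem step_f {q : Fin n} (hq : q ≠ one hn) : (dfa hn).step q f = q := by
  rw [Ne, Fin.ext_iff] at hq
  apply Fin.ext
  simp only [dfa, step19]
  split_ifs <;> simp_all [one]

theorem step_a_val {q : Fin n} (h1 : 1 ≤ q.val) (h2 : q.val < n - 2) :
    ((dfa hn).step q a).val = q.val + 1 := by
  simp only [dfa, step19]
  split_ifs <;> simp_all; omega

theorem step_a_of_val_eq {q : Fin n} (hq : q.val = n - 2) : (dfa hn).step q a = one hn := by
  apply Fin.ext
  simp only [dfa, step19, one]
  split_ifs <;> simp_all; omega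

theorem evalFrom_last (w : List (Fin 4)) : (dfa hn).evalFrom (last hn) w = last hn := by
  induction w with
  | nil => rfl
  | cons l w ih => rw [DFA.evalFrom_cons, step_last, ih]

def rot (k : ℕ) (q : Fin n) : Fin n := (dfa hn).evalFrom q (List.replicate k a)

theorem rot_add (j k : ℕ) (q : Fin n) : rot hn (j + k) q = rot hn k (rot hn j q) := by
  rw [rot, List.replicate_add, DFA.evalFrom_of_append]
  rfl

theorem rot_one (q : Fin n) : rot hn 1 q = (dfa hn).step q a := rfl

theorem rot_apply_last (k : ℕ) : rot hn k (last hn) = last hn := evalFrom_last hn _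

theorem rot_apply_zero (k : ℕ) : rot hn k (zero hn) = zero hn := by
  induction k with
  | zero => rfl
  | succ k ih => rw [rot_add, ih, rot_one, step_zero hn (by decide)]

theorem rot_val_one {k : ℕ} (hk : k < n - 2) : (rot hn k (one hn)).val = k + 1 := by
  induction k with
  | zero => rfl
  | succ k ih =>
    have hk' := ih (by omega)
    rw [rot_add, rot_one, step_a_val hn (by omega) (by omega), hk']

theorem rot_val_sub_one_one {m : Fin n} (h0 : m ≠ zero hn) (hl : m ≠ last hn) :
    rot hn (m.val - 1) (one hn) = m := by
  have := one_le_val hn h0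
  have := val_le_of_ne_last hn hl
  exact Fin.ext (by rw [rot_val_one hn (by omega)]; omega)

theorem rot_period (q : Fin n) : rot hn (n - 2) q = q := by
  have hone : rot hn (n - 2) (one hn) = one hn := by
    rw [show n - 2 = n - 3 + 1 by omega, rot_add, rot_one]
    exact step_a_of_val_eq hn (by rw [rot_val_one hn (by omega)]; omega)
  by_cases h0 : q = zero hn
  · rw [h0, rot_apply_zero]
  by_cases hl : q = last hn
  · rw [hl, rot_apply_last]
  rw [← rot_val_sub_one_one hn h0 hl, ← rot_add, add_comm, rot_add, hone]

theorem rot_eq_one_iff {m : Fin n} (h0 : m ≠ zero hn) (hl : m ≠ last hn) (p : Fin n) :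
    rot hn (n - 1 - m.val) p = one hn ↔ p = m := by
  have := one_le_val hn h0
  have := val_le_of_ne_last hn hl
  constructor
  · intro hp
    rw [← rot_period hn p, show n - 2 = n - 1 - m.val + (m.val - 1) by omega, rot_add, hp,
      rot_val_sub_one_one hn h0 hl]
  · intro hp
    have h := rot_add hn (m.val - 1) (n - 1 - m.val) (one hn)
    rw [show m.val - 1 + (n - 1 - m.val) = n - 2 by omega, rot_period,
      rot_val_sub_one_one hn h0 hl] at h
    rw [hp, h]

def markWord (m : Fin n) : List (Fin 4) :=
  List.replicate (n - 1 - m.val) a ++ f :: List.replicate (m.val - 1) a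

theorem evalFrom_markWord {m : Fin n} (h0 : m ≠ zero hn) (hl : m ≠ last hn) (q : Fin n) :
    (dfa hn).evalFrom q (markWord m) = if q = m then last hn else q := by
  rw [markWord, DFA.evalFrom_of_append, DFA.evalFrom_cons]
  change rot hn (m.val - 1) ((dfa hn).step (rot hn (n - 1 - m.val) q) f) = _
  split_ifs with hq
  · rw [(rot_eq_one_iff hn h0 hl q).mpr hq, step_f_one, rot_apply_last]
  · have := one_le_val hn h0
    rw [step_f hn (mt (rot_eq_one_iff hn h0 hl q).mp hq), ← rot_add,
      show n - 1 - m.val + (m.val - 1) = n - 2 by omega, rot_period]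

theorem last_mem_statesAccepting (u : List (Fin 4)) : last hn ∈ (dfa hn).statesAccepting u :=
  evalFrom_last hn u

theorem statesAccepting_markWord_append {m : Fin n} (h0 : m ≠ zero hn) (hl : m ≠ last hn)
    (u : List (Fin 4)) :
    (dfa hn).statesAccepting (markWord m ++ u) = insert m ((dfa hn).statesAccepting u) := by
  ext q
  rw [DFA.statesAccepting_append, Set.mem_preimage, evalFrom_markWord hn h0 hl,
    Set.mem_insert_iff]
  split_ifs with hq
  · simpa [hq] using last_mem_statesAccepting hn u
  · simp [hq]

def Admissible (T : Set (Fin n)) : Prop :=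
  last hn ∈ T ∧ (zero hn ∈ T → T = Set.univ)

theorem Admissible.preimage_step {T : Set (Fin n)} (hT : Admissible hn T) (l : Fin 4) :
    Admissible hn ((fun q => (dfa hn).step q l) ⁻¹' T) := by
  refine ⟨by simpa [step_last] using hT.1, fun h0 => ?_⟩
  by_cases hl : l = e
  · subst hl
    rw [Set.mem_preimage, step_e hn (zero_ne_last hn)] at h0
    refine Set.eq_univ_of_forall fun q => ?_
    by_cases hq : q = last hn
    · simpa [hq, step_last] using hT.1
    · simpa [step_e hn hq] using h0
  · rw [Set.mem_preimage, step_zero hn hl] at h0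
    rw [hT.2 h0, Set.preimage_univ]

theorem admissible_statesAccepting (u : List (Fin 4)) :
    Admissible hn ((dfa hn).statesAccepting u) := by
  induction u with
  | nil => exact ⟨rfl, fun h => absurd h (zero_ne_last hn)⟩
  | cons l u ih =>
    rw [DFA.statesAccepting_cons]
    exact Admissible.preimage_step hn ih l

theorem statesAccepting_e_f : (dfa hn).statesAccepting [e, f] = Set.univ := by
  refine Set.eq_univ_of_forall fun q => ?_
  by_cases hq : q = last hn
  · rw [hq]
    exact last_mem_statesAccepting hn _
  · change (dfa hn).step ((dfa hn).step q e) f = last hn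
    rw [step_e hn hq, step_f_one]

theorem insert_mem_range_statesAccepting {m : Fin n} (h0 : m ≠ zero hn) {T : Set (Fin n)}
    (hT : T ∈ Set.range (dfa hn).statesAccepting) :
    insert m T ∈ Set.range (dfa hn).statesAccepting := by
  obtain ⟨u, rfl⟩ := hT
  by_cases hl : m = last hn
  · rw [hl, Set.insert_eq_of_mem (last_mem_statesAccepting hn u)]
    exact ⟨u, rfl⟩
  · exact ⟨markWord m ++ u, statesAccepting_markWord_append hn h0 hl u⟩

theorem range_statesAccepting :
    Set.range (dfa hn).statesAccepting = {T | Admissible hn T} := by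
  refine Set.Subset.antisymm (Set.range_subset_iff.mpr (admissible_statesAccepting hn))
    fun T hT => ?_
  by_cases h0 : zero hn ∈ T
  · rw [hT.2 h0, ← statesAccepting_e_f hn]
    exact ⟨_, rfl⟩
  have key : ∀ S : Set (Fin n), zero hn ∉ S →
      insert (last hn) S ∈ Set.range (dfa hn).statesAccepting := by
    intro S
    refine Set.Finite.induction_on
      (motive := fun S _ =>
        zero hn ∉ S → insert (last hn) S ∈ Set.range (dfa hn).statesAccepting)
      S S.toFinite (fun _ => ⟨[], (insert_empty_eq _).symm⟩) ?_
    intro x S _ _ ih hxS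
    rw [Set.insert_comm]
    exact insert_mem_range_statesAccepting hn (fun h => hxS (h ▸ Set.mem_insert x S))
      (ih fun h => hxS (Set.mem_insert_of_mem x h))
  simpa [Set.insert_eq_of_mem hT.1] using key T h0

theorem card_admissible : Nat.card {T | Admissible hn T} = 2 ^ (n - 2) + 1 := by
  have hsplit : {T | Admissible hn T} = insert Set.univ {T | last hn ∈ T ∧ zero hn ∉ T} := by
    ext T
    by_cases h0 : zero hn ∈ T
    · refine ⟨fun h => Or.inl (h.2 h0), ?_⟩
      rintro (rfl | ⟨-, h⟩)
      exacts [⟨trivial, fun _ => rfl⟩, absurd h0 h]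
    · have hne : T ≠ Set.univ := fun h => h0 (h ▸ trivial)
      simp [Admissible, h0, hne]
  have huniv : Set.univ ∉ {T | last hn ∈ T ∧ zero hn ∉ T} := fun h => h.2 trivial
  rw [Nat.card_coe_set_eq, hsplit, Set.ncard_insert_of_notMem huniv,
    Set.ncard_setOf_mem_and_notMem (zero_ne_last hn).symm, Nat.card_fin]

theorem eval_surjective : Function.Surjective (dfa hn).eval := by
  intro q
  by_cases h0 : q = zero hn
  · exact ⟨[], h0.symm⟩
  by_cases hl : q = last hn
  · refine ⟨[e, f], ?_⟩
    change (dfa hn).step ((dfa hn).step (zero hn) e) f = q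
    rw [step_e hn (zero_ne_last hn), step_f_one, hl]
  · refine ⟨e :: List.replicate (q.val - 1) a, ?_⟩
    change rot hn (q.val - 1) ((dfa hn).step (zero hn) e) = q
    rw [step_e hn (zero_ne_last hn), rot_val_sub_one_one hn h0 hl]

theorem eq_of_forall_mem_statesAccepting_iff {p q : Fin n}
    (h : ∀ w, p ∈ (dfa hn).statesAccepting w ↔ q ∈ (dfa hn).statesAccepting w)
    (h0 : q ≠ zero hn) : p = q := by
  have hlast : p = last hn ↔ q = last hn := h []
  by_cases hl : q = last hn
  · rw [hl]
    exact hlast.mpr hl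
  have hp := (h (markWord q ++ [])).mpr
  simp only [statesAccepting_markWord_append hn h0 hl, Set.mem_insert_iff, true_or,
    forall_const] at hp
  exact hp.resolve_right (hl ∘ hlast.mp)

theorem dfa_minimal : DFAMinimal (dfa hn) := by
  refine ⟨eval_surjective hn, fun p q h => ?_⟩
  change ∀ w, p ∈ (dfa hn).statesAccepting w ↔ q ∈ (dfa hn).statesAccepting w at h
  by_cases hq0 : q = zero hn
  · by_cases hp0 : p = zero hn
    · rw [hq0, hp0]
    · exact (eq_of_forall_mem_statesAccepting_iff hn (fun w => (h w).symm) hp0).symm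
  · exact eq_of_forall_mem_statesAccepting_iff hn h hq0

theorem isTwoSidedIdeal_accepts : IsTwoSidedIdeal ((dfa hn).accepts : Set (List (Fin 4))) := by
  refine isTwoSidedIdeal_of_forall_append_mem ⟨[e, f], ?_⟩ fun u w v hw => ?_
  · change zero hn ∈ (dfa hn).statesAccepting [e, f]
    rw [statesAccepting_e_f]
    trivial
  · have huw : (dfa hn).evalFrom (zero hn) u ∈ (dfa hn).statesAccepting w := by
      rw [(admissible_statesAccepting hn w).2 hw]
      trivial
    change (dfa hn).evalFrom (zero hn) (u ++ w ++ v) = last hn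
    rw [DFA.evalFrom_of_append, DFA.evalFrom_of_append,
      show (dfa hn).evalFrom ((dfa hn).evalFrom (zero hn) u) w = last hn from huw, evalFrom_last]

end IdealWitness

/-- For every `n ≥ 4`, there is a two-sided ideal over a
four-letter alphabet with quotient complexity `n` whose reverse has quotient
complexity exactly `2^{n-2} + 1`; a witness is the language of the DFA with
states `{0,…,n-1}`, initial state `0`, final state `n-1`, and letters
`a, d, e, f` acting as in `step19`. -/
theorem stmt_19 (n : ℕ) (hn : 4 ≤ n) :
    let M : DFA (Fin 4) (Fin n) :=
      { step := step19 n hn, start := ⟨0, by omega⟩, accept := {⟨n - 1, by omega⟩} }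
    IsTwoSidedIdeal (M.accepts : Set (List (Fin 4))) ∧
    quotCompl (M.accepts : Set (List (Fin 4))) = n ∧
    quotCompl (langReverse (M.accepts : Set (List (Fin 4)))) = 2 ^ (n - 2) + 1 := by
  open IdealWitness in
  refine ⟨isTwoSidedIdeal_accepts hn, ?_, ?_⟩
  · exact ((dfa hn).quotCompl_accepts_of_minimal (dfa_minimal hn)).trans (Nat.card_fin n)
  · refine ((dfa hn).quotCompl_langReverse_accepts (eval_surjective hn)).trans ?_
    rw [range_statesAccepting, card_admissible]
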